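/- The set of solutions (x₁,x₂,x₃) ∈ [0,1]³ of the system x₁ = min(x₂, 1 - x₃), x₂ = min(x₁, 1 - x₃), x₃ = 1 - x₁ is exactly { (β, β, 1-β) : β ∈ [0,1] }. -/
import Mathlib

theorem example4_min_solutions :
    { p : ℝ × ℝ × ℝ | p.1 ∈ Set.Icc (0:ℝ) 1 ∧ p.2.1 ∈ Set.Icc (0:ℝ) 1 ∧
        p.2.2 ∈ Set.Icc (0:ℝ) 1 ∧
        p.1 = min p.2.1 (1 - p.2.2) ∧ p.2.1 = min p.1 (1 - p.2.2) ∧ p.2.2 = 1 - p.1 }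
      = { p : ℝ × ℝ × ℝ | ∃ β ∈ Set.Icc (0:ℝ) 1, p = (β, β, 1 - β) } := by
  ext ⟨x, y, z⟩
  simp only [Set.mem_setOf_eq, Set.mem_Icc, Prod.mk.injEq]
  constructor
  · rintro ⟨hx, hy, hz, h1, h2, h3⟩
    refine ⟨x, hx, rfl, ?_, ?_⟩
    · have : 1 - z = x := by linarith
      rw [this] at h1 h2
      have := min_le_left x x
      rw [min_self] at h2
      subst h2
      rfl
    · linarith
  · rintro ⟨β, hβ, rfl, rfl, rfl⟩
    refine ⟨hβ, ⟨hβ.1, hβ.2⟩, ⟨by linarith [hβ.2], by linarith [hβ.1]⟩, ?_, ?_, by ring⟩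
    · simp
    · simp
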